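/- arXiv:2601.04757 — 5 statements merged into one kernel-verified Lean document; each statement's English description precedes it below -/
import Mathlib

section
/- Let G be a finite undirected graph (possibly with self-loops) with vertex labeling λ : V(G) → L, and let col : V(G) → C be a stable coloring of G that refines λ. Let T be a finite tree with vertex labeling μ : V(T) → L, rooted at r. Then for all vertices u, v ∈ V(G) with col(u) = col(v), the number of label-respecting homomorphisms h : V(T) → V(G) with h(r) = u (i.e., maps with λ(h(x)) = μ(x) for all x and {h(x),h(y)} ∈ E(G) for every edge {x,y} of T) equals the number of such homomorphisms with h(r) = v. -/
/-- For a graph given by (symmetric) adjacency relation `E` (self-loops allowed),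
`N E col u c` is the set of neighbors of `u` having color `c`. -/
def ColNbrs {V C : Type*} (E : V → V → Prop) (col : V → C) (u : V) (c : C) : Set V :=
  {w | E u w ∧ col w = c}

/-- `col` is a stable coloring: vertices of equal color have equally many
neighbors of each color. -/
def Stable {V C : Type*} (E : V → V → Prop) (col : V → C) : Prop :=
  ∀ u v, col u = col v → ∀ c, (ColNbrs E col u c).ncard = (ColNbrs E col v c).ncard

private def Aset {V VT C : Type*} (E : V → V → Prop) (col : V → C)
    (r : VT) (p : VT → VT) (γ : VT → C) (S : Finset VT) (w : V) : Set (VT → V) :=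
  {h | h r = w ∧ (∀ x ∈ S, col (h x) = γ x) ∧
    (∀ x ∈ S, x ≠ r → E (h (p x)) (h x)) ∧ ∀ x ∉ S, h x = w}

private lemma count_aux {V VT C : Type*} [Fintype V] [Fintype VT]
    (E : V → V → Prop) (col : V → C) (hstable : Stable E col)
    (r : VT) (p : VT → VT) (φ : VT → ℕ)
    (hpr : p r = r) (hφ : ∀ x, x ≠ r → φ (p x) < φ x) (γ : VT → C) :
    ∀ S : Finset VT, r ∈ S → (∀ x ∈ S, p x ∈ S) →
      ∀ u v : V, col u = col v →
      (Aset E col r p γ S u).ncard = (Aset E col r p γ S v).ncard := by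
  classical
  intro S
  induction S using Finset.strongInduction with
  | _ S ih =>
    intro hrS hcl u v huv
    by_cases hbase : ∀ x ∈ S, x = r
    · have he : ∀ w : V, Aset E col r p γ S w =
          if col w = γ r then {fun _ => w} else (∅ : Set (VT → V)) := by
        intro w
        ext h
        simp only [Aset, Set.mem_setOf_eq]
        constructor
        · rintro ⟨h1, h2, _h3, h4⟩
          have hcw : col w = γ r := by rw [← h1]; exact h2 r hrS
          rw [if_pos hcw]
          have heq : h = fun _ => w := by
            funext x
            by_cases hx : x ∈ S
            · rw [hbase x hx]; exact h1
            · exact h4 x hx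
          exact heq
        · intro hmem
          by_cases hc : col w = γ r
          · rw [if_pos hc] at hmem
            rw [Set.mem_singleton_iff] at hmem
            subst hmem
            refine ⟨rfl, ?_, ?_, fun _ _ => rfl⟩
            · intro x hx; rw [hbase x hx]; exact hc
            · intro x hx hxr; exact absurd (hbase x hx) hxr
          · rw [if_neg hc] at hmem; exact absurd hmem (Set.notMem_empty _)
      rw [he u, he v]
      by_cases hc : col u = γ r
      · rw [if_pos hc, if_pos (huv.symm.trans hc), Set.ncard_singleton, Set.ncard_singleton]
      · rw [if_neg hc, if_neg (fun hcv => hc (huv.trans hcv))]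
    · push_neg at hbase
      obtain ⟨x0, hx0S, hx0r⟩ := hbase
      have htne : (S.filter (fun y => y ≠ r)).Nonempty :=
        ⟨x0, Finset.mem_filter.mpr ⟨hx0S, hx0r⟩⟩
      obtain ⟨x, hxt, hxmax⟩ := Finset.exists_max_image _ φ htne
      obtain ⟨hxS, hxr⟩ := Finset.mem_filter.mp hxt
      have hpnex : ∀ y ∈ S, p y ≠ x := by
        intro y hyS hpy
        by_cases hyr : y = r
        · subst hyr; rw [hpr] at hpy; exact hxr hpy.symm
        · have h1 : φ (p y) < φ y := hφ y hyr
          have h2 : φ y ≤ φ x := hxmax y (Finset.mem_filter.mpr ⟨hyS, hyr⟩)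
          rw [hpy] at h1; omega
      have hpxS : p x ∈ S := hcl x hxS
      have hpxx : p x ≠ x := hpnex x hxS
      set S' := S.erase x with hS'
      have hrS' : r ∈ S' := Finset.mem_erase.mpr ⟨Ne.symm hxr, hrS⟩
      have hclS' : ∀ y ∈ S', p y ∈ S' := by
        intro y hy
        obtain ⟨_hyx, hyS⟩ := Finset.mem_erase.mp hy
        exact Finset.mem_erase.mpr ⟨hpnex y hyS, hcl y hyS⟩
      have hS'lt : S' ⊂ S := Finset.erase_ssubset hxS
      have hpxS' : p x ∈ S' := Finset.mem_erase.mpr ⟨hpxx, hpxS⟩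
      have key : ∀ w : V, (Aset E col r p γ S w).ncard =
          ∑ h' ∈ (Aset E col r p γ S' w).toFinset,
            (ColNbrs E col (h' (p x)) (γ x)).ncard := by
        intro w
        rw [Set.ncard_eq_toFinset_card']
        have hmap : ∀ h ∈ (Aset E col r p γ S w).toFinset,
            Function.update h x w ∈ (Aset E col r p γ S' w).toFinset := by
          intro h hh
          rw [Set.mem_toFinset] at hh ⊢
          obtain ⟨h1, h2, h3, h4⟩ := hh
          refine ⟨?_, ?_, ?_, ?_⟩
          · rw [Function.update_of_ne (Ne.symm hxr)]; exact h1
          · intro y hy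
            obtain ⟨hyx, hyS⟩ := Finset.mem_erase.mp hy
            rw [Function.update_of_ne hyx]; exact h2 y hyS
          · intro y hy hyr
            obtain ⟨hyx, hyS⟩ := Finset.mem_erase.mp hy
            rw [Function.update_of_ne hyx, Function.update_of_ne (hpnex y hyS)]
            exact h3 y hyS hyr
          · intro y hy
            by_cases hyx : y = x
            · subst hyx; exact Function.update_self _ _ _
            · rw [Function.update_of_ne hyx]
              exact h4 y (fun hyS => hy (Finset.mem_erase.mpr ⟨hyx, hyS⟩))
        rw [Finset.card_eq_sum_card_fiberwise hmap]
        refine Finset.sum_congr rfl ?_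
        intro h' hh'
        rw [Set.ncard_eq_toFinset_card']
        have hh'm := Set.mem_toFinset.mp hh'
        obtain ⟨g1, g2, g3, g4⟩ := hh'm
        have hh'x : h' x = w := g4 x (fun hx => (Finset.mem_erase.mp hx).1 rfl)
        apply Finset.card_bij (fun h _ => h x)
        · intro h hh
          rw [Finset.mem_filter] at hh
          obtain ⟨hhA, hhf⟩ := hh
          rw [Set.mem_toFinset] at hhA
          obtain ⟨h1, h2, h3, h4⟩ := hhA
          rw [Set.mem_toFinset]
          have hpx : h (p x) = h' (p x) := by
            rw [← hhf, Function.update_of_ne hpxx]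
          refine ⟨?_, ?_⟩
          · rw [← hpx]; exact h3 x hxS hxr
          · exact h2 x hxS
        · intro h1 hh1 h2 hh2 heq
          rw [Finset.mem_filter] at hh1 hh2
          funext y
          by_cases hyx : y = x
          · subst hyx; exact heq
          · have e1 : h1 y = h' y := by rw [← hh1.2, Function.update_of_ne hyx]
            have e2 : h2 y = h' y := by rw [← hh2.2, Function.update_of_ne hyx]
            rw [e1, e2]
        · intro b hb
          rw [Set.mem_toFinset] at hb
          obtain ⟨hbE, hbc⟩ := hb
          refine ⟨Function.update h' x b, ?_, Function.update_self _ _ _⟩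
          rw [Finset.mem_filter]
          constructor
          · rw [Set.mem_toFinset]
            refine ⟨?_, ?_, ?_, ?_⟩
            · rw [Function.update_of_ne (Ne.symm hxr)]; exact g1
            · intro y hy
              by_cases hyx : y = x
              · subst hyx; rw [Function.update_self]; exact hbc
              · rw [Function.update_of_ne hyx]
                exact g2 y (Finset.mem_erase.mpr ⟨hyx, hy⟩)
            · intro y hy hyr
              rw [Function.update_of_ne (hpnex y hy)]
              by_cases hyx : y = x
              · subst hyx; rw [Function.update_self]; exact hbE
              · rw [Function.update_of_ne hyx]
                exact g3 y (Finset.mem_erase.mpr ⟨hyx, hy⟩) hyr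
            · intro y hy
              have hyx : y ≠ x := fun h => hy (h ▸ hxS)
              rw [Function.update_of_ne hyx]
              exact g4 y (fun hyS => hy ((Finset.mem_erase.mp hyS).2))
          · rw [Function.update_idem]
            rw [← hh'x, Function.update_eq_self]
      have hIH := ih S' hS'lt hrS' hclS' u v huv
      rw [key u, key v]
      rcases Finset.eq_empty_or_nonempty ((Aset E col r p γ S' u).toFinset) with hFu | hFu
      · have hv0 : ((Aset E col r p γ S' v).toFinset).card = 0 := by
          rw [← Set.ncard_eq_toFinset_card', ← hIH, Set.ncard_eq_toFinset_card', hFu,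
            Finset.card_empty]
        rw [hFu, Finset.card_eq_zero.mp hv0]
      · obtain ⟨h0, hh0⟩ := hFu
        have hterm : ∀ w' : V, ∀ h' ∈ (Aset E col r p γ S' w').toFinset,
            (ColNbrs E col (h' (p x)) (γ x)).ncard =
            (ColNbrs E col (h0 (p x)) (γ x)).ncard := by
          intro w' h' hh'
          have c1 : col (h' (p x)) = γ (p x) :=
            ((Set.mem_toFinset.mp hh').2.1) (p x) hpxS'
          have c0 : col (h0 (p x)) = γ (p x) :=
            ((Set.mem_toFinset.mp hh0).2.1) (p x) hpxS'
          exact hstable _ _ (c1.trans c0.symm) (γ x)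
        rw [Finset.sum_congr rfl (hterm u), Finset.sum_congr rfl (hterm v),
          Finset.sum_const, Finset.sum_const,
          ← Set.ncard_eq_toFinset_card', ← Set.ncard_eq_toFinset_card', hIH]

open SimpleGraph in
private lemma tree_parent {VT : Type*} (T : SimpleGraph VT) (hT : T.IsTree) (r : VT) :
    ∃ p : VT → VT, p r = r ∧
      (∀ x, x ≠ r → T.Adj x (p x) ∧ T.dist r (p x) + 1 = T.dist r x) ∧
      ∀ x y, T.Adj x y → p x = y ∨ p y = x := by
  classical
  have hconn : T.Connected := hT.isConnected
  -- a vertex a cannot lie on a short walk from r ending elsewhere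
  have hnotmem : ∀ (a w' : VT) (P : T.Walk r w'), a ≠ w' → P.length ≤ T.dist r a →
      a ∉ P.support := by
    intro a w' P hne hlen hmem
    have hspec := P.take_spec hmem
    have hlen2 : (P.takeUntil a hmem).length + (P.dropUntil a hmem).length = P.length := by
      rw [← Walk.length_append, hspec]
    have h1 : T.dist r a ≤ (P.takeUntil a hmem).length := dist_le _
    have h3 : T.dist a w' ≤ (P.dropUntil a hmem).length := dist_le _
    have h4 : 0 < T.dist a w' := hconn.pos_dist_of_ne hne
    omega
  have hconcat_path : ∀ {a w' : VT} (P : T.Walk r w') (h : T.Adj w' a),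
      P.IsPath → a ∉ P.support → (P.concat h).IsPath := by
    intro a w' P h hP hx
    rw [← Walk.isPath_reverse_iff, Walk.reverse_concat]
    rw [Walk.cons_isPath_iff]
    exact ⟨(Walk.isPath_reverse_iff _).mpr hP, by rwa [Walk.support_reverse, List.mem_reverse]⟩
  -- existence of a parent candidate
  have hex : ∀ x : VT, x ≠ r → ∃ y : VT, T.Adj x y ∧ T.dist r y + 1 = T.dist r x := by
    intro x hxr
    obtain ⟨q, hq, hqlen⟩ := (hconn x r).exists_path_of_dist
    obtain ⟨y, hadj, q', rfl⟩ := Walk.exists_eq_cons_of_ne hxr q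
    refine ⟨y, hadj, ?_⟩
    have hlq : q'.length + 1 = T.dist x r := by
      rw [← hqlen, Walk.length_cons]
    have h1 : T.dist r y ≤ q'.length := by
      rw [SimpleGraph.dist_comm]; exact dist_le q'
    have h2 : T.dist r x ≤ T.dist r y + 1 := by
      have := hconn.dist_triangle (u := r) (v := y) (w := x)
      have hyx : T.dist y x ≤ 1 := by
        have := dist_le hadj.symm.toWalk
        simpa using this
      omega
    have h5 : T.dist x r = T.dist r x := dist_comm
    omega
  -- uniqueness of the parent
  have huniq : ∀ x y z : VT, T.Adj x y → T.Adj x z →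
      T.dist r y + 1 = T.dist r x → T.dist r z + 1 = T.dist r x → y = z := by
    intro x y z hxy hxz hy hz
    obtain ⟨Py, hPy, hPylen⟩ := (hconn r y).exists_path_of_dist
    obtain ⟨Pz, hPz, hPzlen⟩ := (hconn r z).exists_path_of_dist
    have hxy' : x ≠ y := fun h => by rw [h] at hy; omega
    have hxz' : x ≠ z := fun h => by rw [h] at hz; omega
    have hxnoty : x ∉ Py.support := hnotmem x y Py hxy' (by omega)
    have hxnotz : x ∉ Pz.support := hnotmem x z Pz hxz' (by omega)
    have hc1 : (Py.concat hxy.symm).IsPath := hconcat_path Py hxy.symm hPy hxnoty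
    have hc2 : (Pz.concat hxz.symm).IsPath := hconcat_path Pz hxz.symm hPz hxnotz
    obtain ⟨P, -, hPuniq⟩ := hT.existsUnique_path r x
    have h12 : Py.concat hxy.symm = Pz.concat hxz.symm :=
      (hPuniq _ hc1).trans (hPuniq _ hc2).symm
    have hs := congrArg (fun q => q.reverse.support) h12
    simp only [Walk.reverse_concat, Walk.support_cons] at hs
    have hs2 : Py.reverse.support = Pz.reverse.support := by
      injection hs
    rw [Walk.support_eq_cons Py.reverse, Walk.support_eq_cons Pz.reverse] at hs2
    injection hs2
  choose f hf using hex
  refine ⟨fun x => if hx : x = r then r else f x hx, by simp, ?_, ?_⟩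
  · intro x hx
    simp only [dif_neg hx]
    exact ⟨(hf x hx).1, (hf x hx).2⟩
  · intro x y hxy
    have hxyne : x ≠ y := hxy.ne
    have hdne : T.dist r x ≠ T.dist r y := by
      intro hd
      by_cases hd0 : T.dist r x = 0
      · have hx : r = x := (hconn.dist_eq_zero_iff).mp hd0
        have hy : r = y := (hconn.dist_eq_zero_iff).mp (hd ▸ hd0)
        exact hxyne (hx ▸ hy)
      · obtain ⟨Px, hPx, hPxlen⟩ := (hconn r x).exists_path_of_dist
        obtain ⟨Py, hPy, hPylen⟩ := (hconn r y).exists_path_of_dist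
        have hxnoty : x ∉ Py.support := hnotmem x y Py hxyne (by omega)
        have hc1 : (Py.concat hxy.symm).IsPath := hconcat_path Py hxy.symm hPy hxnoty
        obtain ⟨P, -, hPuniq⟩ := hT.existsUnique_path r x
        have h12 : Py.concat hxy.symm = Px := (hPuniq _ hc1).trans (hPuniq _ hPx).symm
        have := congrArg Walk.length h12
        rw [Walk.length_concat] at this
        omega
    have htri1 : T.dist r x ≤ T.dist r y + 1 := by
      have := hconn.dist_triangle (u := r) (v := y) (w := x)
      have h1 : T.dist y x ≤ 1 := by simpa using dist_le hxy.symm.toWalk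
      omega
    have htri2 : T.dist r y ≤ T.dist r x + 1 := by
      have := hconn.dist_triangle (u := r) (v := x) (w := y)
      have h1 : T.dist x y ≤ 1 := by simpa using dist_le hxy.toWalk
      omega
    rcases (by omega : T.dist r y + 1 = T.dist r x ∨ T.dist r x + 1 = T.dist r y) with hc | hc
    · left
      have hxr : x ≠ r := by
        intro h; rw [h, SimpleGraph.dist_self] at hc; omega
      simp only [dif_neg hxr]
      exact huniq x (f x hxr) y (hf x hxr).1 hxy (hf x hxr).2 hc
    · right
      have hyr : y ≠ r := by
        intro h; rw [h, SimpleGraph.dist_self] at hc; omega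
      simp only [dif_neg hyr]
      exact huniq y (f y hyr) x (hf y hyr).1 hxy.symm (hf y hyr).2 hc

theorem stmt6 {V VT C L : Type*} [Fintype V] [Fintype VT]
    (E : V → V → Prop) (hE : Symmetric E)
    (lam : V → L) (col : V → C)
    (hstable : Stable E col)
    (href : ∀ u v, col u = col v → lam u = lam v)
    (T : SimpleGraph VT) (hT : T.IsTree) (r : VT) (mu : VT → L)
    (u v : V) (huv : col u = col v) :
    {h : VT → V | (∀ x, lam (h x) = mu x) ∧
        (∀ x y, T.Adj x y → E (h x) (h y)) ∧ h r = u}.ncard =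
    {h : VT → V | (∀ x, lam (h x) = mu x) ∧
        (∀ x y, T.Adj x y → E (h x) (h y)) ∧ h r = v}.ncard := by
  classical
  obtain ⟨p, hpr, hpadj, hpcov⟩ := tree_parent T hT r
  have homiff : ∀ h : VT → V,
      (∀ x y, T.Adj x y → E (h x) (h y)) ↔ (∀ x, x ≠ r → E (h (p x)) (h x)) := by
    intro h
    constructor
    · intro hh x hx
      exact hE (hh x (p x) (hpadj x hx).1)
    · intro hh x y hxy
      rcases hpcov x y hxy with hc | hc
      · have hxr : x ≠ r := by
          rintro rfl; rw [hpr] at hc; exact hxy.ne hc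
        have := hh x hxr; rw [hc] at this; exact hE this
      · have hyr : y ≠ r := by
          rintro rfl; rw [hpr] at hc; exact hxy.ne hc.symm
        have := hh y hyr; rw [hc] at this; exact this
  have hφ : ∀ x, x ≠ r → T.dist r (p x) < T.dist r x := by
    intro x hx
    have := (hpadj x hx).2
    omega
  set f : (VT → V) → (VT → C) := fun h => col ∘ h with hf
  set t : Finset (VT → C) := Finset.univ.image f with ht
  have hmapu : ∀ h ∈ {h : VT → V | (∀ x, lam (h x) = mu x) ∧
      (∀ x y, T.Adj x y → E (h x) (h y)) ∧ h r = u}.toFinset, f h ∈ t :=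
    fun h _ => Finset.mem_image_of_mem f (Finset.mem_univ h)
  have hmapv : ∀ h ∈ {h : VT → V | (∀ x, lam (h x) = mu x) ∧
      (∀ x y, T.Adj x y → E (h x) (h y)) ∧ h r = v}.toFinset, f h ∈ t :=
    fun h _ => Finset.mem_image_of_mem f (Finset.mem_univ h)
  rw [Set.ncard_eq_toFinset_card', Set.ncard_eq_toFinset_card',
    Finset.card_eq_sum_card_fiberwise hmapu, Finset.card_eq_sum_card_fiberwise hmapv]
  refine Finset.sum_congr rfl ?_
  intro γ _
  by_cases hcompat : ∀ (x : VT) (w : V), col w = γ x → lam w = mu x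
  · -- each fiber equals the corresponding Aset on univ
    have hfib : ∀ w : V,
        ({h : VT → V | (∀ x, lam (h x) = mu x) ∧
          (∀ x y, T.Adj x y → E (h x) (h y)) ∧ h r = w}.toFinset.filter
            (fun h => f h = γ)) = (Aset E col r p γ Finset.univ w).toFinset := by
      intro w
      ext h
      rw [Finset.mem_filter, Set.mem_toFinset, Set.mem_toFinset]
      simp only [Set.mem_setOf_eq, Aset]
      constructor
      · rintro ⟨⟨h1, h2, h3⟩, h4⟩
        refine ⟨h3, ?_, ?_, ?_⟩
        · intro x _; exact congrFun h4 x
        · intro x _ hxr; exact (homiff h).mp h2 x hxr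
        · intro x hx; exact absurd (Finset.mem_univ x) hx
      · rintro ⟨h1, h2, h3, _⟩
        refine ⟨⟨?_, ?_, h1⟩, ?_⟩
        · intro x; exact hcompat x (h x) (h2 x (Finset.mem_univ x))
        · exact (homiff h).mpr (fun x hxr => h3 x (Finset.mem_univ x) hxr)
        · funext x; exact h2 x (Finset.mem_univ x)
    rw [hfib u, hfib v, ← Set.ncard_eq_toFinset_card', ← Set.ncard_eq_toFinset_card']
    exact count_aux E col hstable r p (T.dist r) hpr hφ γ Finset.univ
      (Finset.mem_univ r) (fun x _ => Finset.mem_univ (p x)) u v huv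
  · push_neg at hcompat
    obtain ⟨x0, w0, hw0, hlam0⟩ := hcompat
    have hfib : ∀ w : V,
        ({h : VT → V | (∀ x, lam (h x) = mu x) ∧
          (∀ x y, T.Adj x y → E (h x) (h y)) ∧ h r = w}.toFinset.filter
            (fun h => f h = γ)) = ∅ := by
      intro w
      rw [Finset.eq_empty_iff_forall_notMem]
      intro h hh
      rw [Finset.mem_filter, Set.mem_toFinset] at hh
      obtain ⟨⟨h1, _, _⟩, h4⟩ := hh
      have hcx : col (h x0) = γ x0 := congrFun h4 x0
      have : lam (h x0) = lam w0 := href _ _ (hcx.trans hw0.symm)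
      exact hlam0 (this ▸ h1 x0)
    rw [hfib u, hfib v]
end

section
/- Let G be a finite undirected graph with vertex labeling λ, and let col : V(G) → C be a stable coloring refining λ. Define the quotient graph G_col with vertex set C, where c and c' are adjacent iff some (equivalently, every) vertex of color c has a neighbor of color c', and with label λ(c) := λ(u) for any u with col(u) = c. Then for every labeled tree T: there exists a label-respecting homomorphism from T to G if and only if there exists one from T to G_col. -/
/-- Lift a walk in the tree to a sequence of vertices in `V`, starting from a
base vertex of the right color and repeatedly extending by neighbors
of the prescribed colors. -/
noncomputable def liftF {V VT C : Type*}
    (E : V → V → Prop) (col : V → C)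
    (T : SimpleGraph VT) (g : VT → C) (r : VT)
    (hstep : ∀ (x y : VT) (v : V), T.Adj x y → col v = g y → ∃ u, col u = g x ∧ E v u)
    (v0 : {v : V // col v = g r}) : ∀ {x : VT}, T.Walk x r → {v : V // col v = g x}
  | _, SimpleGraph.Walk.nil => v0
  | _, SimpleGraph.Walk.cons hadj q =>
      let prev := liftF E col T g r hstep v0 q
      ⟨(hstep _ _ prev.val hadj prev.2).choose,
        (hstep _ _ prev.val hadj prev.2).choose_spec.1⟩

lemma liftF_step {V VT C : Type*}
    (E : V → V → Prop) (col : V → C)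
    (T : SimpleGraph VT) (g : VT → C) (r : VT)
    (hstep : ∀ (x y : VT) (v : V), T.Adj x y → col v = g y → ∃ u, col u = g x ∧ E v u)
    (v0 : {v : V // col v = g r}) {x y : VT} (hadj : T.Adj x y) (q : T.Walk y r) :
    E (liftF E col T g r hstep v0 q).val
      (liftF E col T g r hstep v0 (q.cons hadj)).val := by
  have := (hstep x y (liftF E col T g r hstep v0 q).val hadj
    (liftF E col T g r hstep v0 q).2).choose_spec.2
  simpa [liftF] using this

theorem stmt7 {V VT C L : Type*} [Fintype V] [Fintype VT]
    (E : V → V → Prop) (hE : Symmetric E)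
    (lam : V → L) (col : V → C)
    (hstable : Stable E col)
    (href : ∀ u v, col u = col v → lam u = lam v)
    (T : SimpleGraph VT) (hT : T.IsTree) (mu : VT → L) :
    (∃ h : VT → V, (∀ x, lam (h x) = mu x) ∧
        ∀ x y, T.Adj x y → E (h x) (h y)) ↔
    (∃ g : VT → C, (∀ x, ∃ u, col u = g x ∧ lam u = mu x) ∧
        ∀ x y, T.Adj x y → ∃ u w, col u = g x ∧ col w = g y ∧ E u w) := by
  constructor
  · rintro ⟨h, hlab, hadj⟩
    exact ⟨fun x => col (h x), fun x => ⟨h x, rfl, hlab x⟩,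
      fun x y hxy => ⟨h x, h y, rfl, rfl, hadj x y hxy⟩⟩
  · rintro ⟨g, hlab, gadj⟩
    -- stability: nonemptiness of colored neighborhoods transfers
    have transfer : ∀ u v : V, col u = col v → ∀ c : C,
        (ColNbrs E col u c).Nonempty → (ColNbrs E col v c).Nonempty := by
      intro u v hc c hne
      have h1 : 0 < (ColNbrs E col u c).ncard :=
        (Set.ncard_pos (Set.toFinite _)).2 hne
      rw [hstable u v hc c] at h1
      exact (Set.ncard_pos (Set.toFinite _)).1 h1
    -- step lemma for lifting
    have hstep : ∀ (x y : VT) (v : V), T.Adj x y → col v = g y →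
        ∃ u, col u = g x ∧ E v u := by
      intro x y v hxy hv
      obtain ⟨u, w, hu, hw, huw⟩ := gadj x y hxy
      have hne : (ColNbrs E col w (g x)).Nonempty := ⟨u, hE huw, hu⟩
      obtain ⟨u', hu'⟩ := transfer w v (hw.trans hv.symm) (g x) hne
      exact ⟨u', hu'.2, hu'.1⟩
    classical
    obtain ⟨hVT, huniq⟩ := SimpleGraph.isTree_iff_existsUnique_path.1 hT
    obtain ⟨r⟩ := hVT
    obtain ⟨v0, hv0⟩ := hlab r
    -- the unique path from x to r
    have hP := fun x => (huniq x r).choose_spec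
    set P : ∀ x : VT, T.Walk x r := fun x => (huniq x r).choose with hPdef
    have hPpath : ∀ x, (P x).IsPath := fun x => (hP x).1
    have hPuniq : ∀ x (q : T.Walk x r), q.IsPath → q = P x := fun x q hq => (hP x).2 q hq
    refine ⟨fun x => (liftF E col T g r hstep ⟨v0, hv0.1⟩ (P x)).val, ?_, ?_⟩
    · intro x
      obtain ⟨u, hu, hu'⟩ := hlab x
      have : col (liftF E col T g r hstep ⟨v0, hv0.1⟩ (P x)).val = col u :=
        (liftF E col T g r hstep ⟨v0, hv0.1⟩ (P x)).2.trans hu.symm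
      exact (href _ _ this).trans hu'
    · intro x y hxy
      by_cases hx : x ∈ (P y).support
      · -- P y = cons hxy.symm (P x)
        have hdrop : (P y).dropUntil x hx = P x :=
          hPuniq x _ ((hPpath y).dropUntil hx)
        have htake : (P y).takeUntil x hx =
            SimpleGraph.Walk.cons hxy.symm SimpleGraph.Walk.nil := by
          exact (huniq y x).unique ((hPpath y).takeUntil hx)
            (by simp [SimpleGraph.Walk.cons_isPath_iff, hxy.ne'])
        have hPy : P y = SimpleGraph.Walk.cons hxy.symm (P x) := by
          conv_lhs => rw [← SimpleGraph.Walk.take_spec (P y) hx]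
          rw [htake, hdrop]
          rfl
        have := liftF_step E col T g r hstep ⟨v0, hv0.1⟩ hxy.symm (P x)
        rw [← hPy] at this
        exact this
      · -- P x = cons hxy (P y)
        have hPx : P x = SimpleGraph.Walk.cons hxy (P y) :=
          (hPuniq x _ ((hPpath y).cons hx)).symm
        have := liftF_step E col T g r hstep ⟨v0, hv0.1⟩ hxy (P y)
        rw [← hPx] at this
        exact hE this
end

section
/- Let G be a finite undirected graph with vertex labeling λ, col a stable coloring refining λ, and G_col the color quotient. Let T be a labeled tree rooted at r and let μ : V(T) → C be a label-respecting homomorphism from T to G_col. Then for every vertex v ∈ V(G) with col(v) = μ(r), there exists a label-respecting homomorphism h : V(T) → V(G) from T to G with h(r) = v and col(h(x)) = μ(x) for all x ∈ V(T). -/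
open Classical in
noncomputable def valAux {V VT C : Type*} (E : V → V → Prop) (col : V → C)
    {T : SimpleGraph VT} {r : VT} (mu : VT → C) (v : V) :
    ∀ {x : VT}, T.Walk x r → V
  | _, SimpleGraph.Walk.nil => v
  | x, SimpleGraph.Walk.cons _ p =>
      if h : ∃ w, E (valAux E col mu v p) w ∧ col w = mu x then h.choose else v

lemma valAux_col {V VT C : Type*} (E : V → V → Prop) (col : V → C)
    {T : SimpleGraph VT} {r : VT} (mu : VT → C) (v : V)
    (hv : col v = mu r)
    (hex : ∀ x z, T.Adj x z → ∀ u, col u = mu z → ∃ w, E u w ∧ col w = mu x) :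
    ∀ {x : VT} (p : T.Walk x r), col (valAux E col mu v p) = mu x := by
  intro x p
  induction p with
  | nil => rw [valAux]; exact hv
  | cons hadj p ih =>
    have hE := hex _ _ hadj _ (ih hv)
    rw [valAux, dif_pos hE]
    exact hE.choose_spec.2

lemma valAux_adj {V VT C : Type*} (E : V → V → Prop) (col : V → C)
    {T : SimpleGraph VT} {r : VT} (mu : VT → C) (v : V)
    (hv : col v = mu r)
    (hex : ∀ x z, T.Adj x z → ∀ u, col u = mu z → ∃ w, E u w ∧ col w = mu x)
    {x z : VT} (hadj : T.Adj x z) (p : T.Walk z r) :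
    E (valAux E col mu v p) (valAux E col mu v (SimpleGraph.Walk.cons hadj p)) := by
  have hE := hex x z hadj _ (valAux_col E col mu v hv hex p)
  rw [valAux, dif_pos hE]
  exact hE.choose_spec.1

theorem stmt9 {V VT C L : Type*} [Fintype V] [Fintype VT]
    (E : V → V → Prop) (hE : Symmetric E)
    (lam : V → L) (col : V → C)
    (hstable : Stable E col)
    (href : ∀ u v, col u = col v → lam u = lam v)
    (T : SimpleGraph VT) (hT : T.IsTree) (r : VT)
    (lamT : VT → L) (mu : VT → C)
    (hmuhom : (∀ x, ∃ u, col u = mu x ∧ lam u = lamT x) ∧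
      ∀ x y, T.Adj x y → ∃ u w, col u = mu x ∧ col w = mu y ∧ E u w) :
    ∀ v : V, col v = mu r →
      ∃ h : VT → V, (∀ x, lam (h x) = lamT x) ∧
        (∀ x y, T.Adj x y → E (h x) (h y)) ∧
        h r = v ∧ ∀ x, col (h x) = mu x := by
  classical
  intro v hv
  -- stability ⇒ every vertex of a color with an adjacent pair has such a neighbor
  have key : ∀ (u : V) (c : C), (∃ a b : V, col a = col u ∧ col b = c ∧ E a b) →
      ∃ w, E u w ∧ col w = c := by
    intro u c ⟨a, b, ha, hb, hab⟩
    have hcard := hstable a u ha c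
    have hne : (ColNbrs E col a c).Nonempty := ⟨b, hab, hb⟩
    have hpos : 0 < (ColNbrs E col a c).ncard :=
      (Set.ncard_pos (Set.toFinite _)).2 hne
    rw [hcard] at hpos
    obtain ⟨w, hw1, hw2⟩ := (Set.ncard_pos (s := ColNbrs E col u c) (Set.toFinite _)).1 hpos
    exact ⟨w, hw1, hw2⟩
  have hex : ∀ x z, T.Adj x z → ∀ u, col u = mu z → ∃ w, E u w ∧ col w = mu x := by
    intro x z hadj u hu
    obtain ⟨a, b, ha, hb, hab⟩ := hmuhom.2 x z hadj
    exact key u (mu x) ⟨b, a, by rw [hb, hu], ha, hE hab⟩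
  have huniq := hT.existsUnique_path
  set pth : ∀ x : VT, T.Walk x r := fun x => (huniq x r).choose with hpth
  have pthPath : ∀ x, (pth x).IsPath := fun x => (huniq x r).choose_spec.1
  set h : VT → V := fun x => valAux E col mu v (pth x) with hh
  have hcol : ∀ x, col (h x) = mu x := fun x => valAux_col E col mu v hv hex (pth x)
  refine ⟨h, ?_, ?_, ?_, hcol⟩
  · intro x
    obtain ⟨u, hu1, hu2⟩ := hmuhom.1 x
    rw [← hu2]
    exact href _ _ (by rw [hcol x, hu1])
  · intro x y hadj
    by_cases hx : x ∈ (pth y).support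
    · -- pth y = cons (y~x) (pth x)
      have htake : (pth y).takeUntil x hx = SimpleGraph.Walk.cons hadj.symm SimpleGraph.Walk.nil := by
        refine (huniq y x).unique ((pthPath y).takeUntil hx) ?_
        rw [SimpleGraph.Walk.cons_isPath_iff]
        exact ⟨SimpleGraph.Walk.IsPath.nil, by simpa using hadj.ne'⟩
      have hdrop : (pth y).dropUntil x hx = pth x :=
        (huniq x r).unique ((pthPath y).dropUntil hx) (pthPath x)
      have hspec := (pth y).take_spec hx
      rw [htake, hdrop] at hspec
      simp only [SimpleGraph.Walk.cons_append, SimpleGraph.Walk.nil_append] at hspec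
      have := valAux_adj E col mu v hv hex hadj.symm (pth x)
      rw [hspec] at this
      exact this
    · have hq : (SimpleGraph.Walk.cons hadj (pth y)).IsPath :=
        (SimpleGraph.Walk.cons_isPath_iff _ _).2 ⟨pthPath y, hx⟩
      have : pth x = SimpleGraph.Walk.cons hadj (pth y) := (huniq x r).unique (pthPath x) hq
      have h2 := valAux_adj E col mu v hv hex hadj (pth y)
      rw [← this] at h2
      exact hE h2
  · have : pth r = SimpleGraph.Walk.nil := (huniq r r).unique (pthPath r) SimpleGraph.Walk.IsPath.nil
    show valAux E col mu v (pth r) = v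
    rw [this, valAux]
end

section
/- Let G be a finite undirected graph with vertex labeling λ : V(G) → L, let col be a stable coloring of G refining λ, and let T be a labeled tree rooted at r with labels μ : V(T) → L. Define, for each color c and each vertex x of T bottom-up: f(c,x) := [λ(c) = μ(x)] · ∏_{y ∈ Children(x)} ( ∑_{c' ∈ C} f(c',y) · deg(c,c') ), where λ(c) is the common label of vertices of color c, [·] is the indicator, and deg(c,c') is the common number of neighbors of color c' of any vertex of color c. Then for every vertex v ∈ V(G) with col(v) = c, f(c,r) equals the number of label-respecting homomorphisms h from T to G with h(r) = v. -/
theorem stmt15 {V VT C L : Type*} [Fintype V] [Fintype C] [Fintype VT]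
    [DecidableEq VT] [DecidableEq L]
    (E : V → V → Prop) (hE : Symmetric E)
    (lam : V → L) (col : V → C)
    (hstable : Stable E col)
    (href : ∀ u v, col u = col v → lam u = lam v)
    -- a rooted tree on `VT`: root `r`, parent function `pa`
    (r : VT) (pa : VT → VT) (hroot : pa r = r)
    (hreach : ∀ x : VT, ∃ n, pa^[n] x = r)
    (mu : VT → L)
    -- the common label of the vertices of a color
    (lamC : C → L) (hlamC : ∀ u, lamC (col u) = lam u)
    -- the common number of neighbors of color `c'` of any vertex of color `c`
    (degf : C → C → ℕ)
    (hdeg : ∀ (u : V) (c' : C), degf (col u) c' = (ColNbrs E col u c').ncard)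
    -- `f` satisfies the bottom-up recurrence
    (f : C → VT → ℕ)
    (hf : ∀ c x, f c x = (if lamC c = mu x then 1 else 0) *
      ∏ y ∈ Finset.univ.filter (fun y => y ≠ r ∧ pa y = x),
        ∑ c' : C, f c' y * degf c c') :
    ∀ v : V, f (col v) r =
      {h : VT → V | (∀ x, lam (h x) = mu x) ∧
        (∀ x, x ≠ r → E (h x) (h (pa x))) ∧ h r = v}.ncard := by
  classical
  intro v
  have hfixr : ∀ n : ℕ, pa^[n] r = r := fun n => Function.iterate_fixed hroot n
  have L1 : ∀ (x : VT) (n : ℕ), pa^[n] x = x → n = 0 ∨ x = r := by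
    intro x n h
    rcases Nat.eq_zero_or_pos n with h0 | hn
    · exact Or.inl h0
    right
    obtain ⟨m, hm⟩ := hreach x
    have hkn : ∀ k : ℕ, pa^[k * n] x = x := by
      intro k
      induction k with
      | zero => simp
      | succ k ih => rw [Nat.succ_mul, Function.iterate_add_apply, h, ih]
    have hge : m ≤ m * n := Nat.le_mul_of_pos_right m hn
    calc x = pa^[m * n] x := (hkn m).symm
      _ = pa^[m * n - m] (pa^[m] x) := by
          rw [← Function.iterate_add_apply]; congr 1; omega
      _ = r := by rw [hm, hfixr]
  set sub : VT → Set VT := fun x => {y | ∃ n : ℕ, pa^[n] y = x} with hsubdef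
  have hself : ∀ x, x ∈ sub x := fun x => ⟨0, rfl⟩
  have hchsub : ∀ x y, pa y = x → sub y ⊆ sub x := by
    rintro x y hp z ⟨n, hn⟩
    exact ⟨n + 1, by rw [Function.iterate_succ_apply', hn, hp]⟩
  have hnotin : ∀ x y, y ≠ r → pa y = x → x ∉ sub y := by
    rintro x y hyr hp ⟨n, hn⟩
    have hcyc : pa^[n + 1] x = x := by
      rw [Function.iterate_succ_apply', hn, hp]
    rcases L1 x (n + 1) hcyc with h0 | hxr
    · omega
    · subst hxr
      exact hyr (by rw [← hn, hfixr])
  have hchne : ∀ x y, y ≠ r → pa y = x → y ≠ x := by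
    intro x y hyr hp he
    subst he
    rcases L1 y 1 (by simpa using hp) with h0 | hr
    · omega
    · exact hyr hr
  have hpacl : ∀ y z, z ∈ sub y → z ≠ y → pa z ∈ sub y := by
    rintro y z ⟨n, hn⟩ hne
    rcases Nat.eq_zero_or_pos n with h0 | hpos
    · subst h0; exact absurd hn hne
    refine ⟨n - 1, ?_⟩
    have hn' : pa^[n - 1 + 1] z = y := by
      rw [(by omega : n - 1 + 1 = n)]; exact hn
    rw [Function.iterate_succ_apply] at hn'
    exact hn'
  have hdisj : ∀ x y1 y2, y1 ≠ r → pa y1 = x → y2 ≠ r → pa y2 = x → y1 ≠ y2 →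
      ∀ z, z ∈ sub y1 → z ∈ sub y2 → False := by
    have key : ∀ x y1 y2, y1 ≠ r → pa y1 = x → y2 ≠ r → pa y2 = x → y1 ≠ y2 →
        ∀ (z : VT) (n1 n2 : ℕ), pa^[n1] z = y1 → pa^[n2] z = y2 → n1 ≤ n2 → False := by
      intro x y1 y2 h1r hp1 h2r hp2 hne z n1 n2 hn1 hn2 hle
      have h12 : pa^[n2 - n1] y1 = y2 := by
        rw [← hn1, ← Function.iterate_add_apply]
        have : n2 - n1 + n1 = n2 := by omega
        rw [this, hn2]
      rcases Nat.eq_zero_or_pos (n2 - n1) with h0 | hpos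
      · rw [h0] at h12; exact hne h12
      · have h12' : pa^[n2 - n1 - 1 + 1] y1 = y2 := by
          rw [(by omega : n2 - n1 - 1 + 1 = n2 - n1)]; exact h12
        rw [Function.iterate_succ_apply, hp1] at h12'
        have hx2 : pa^[n2 - n1 - 1] x = y2 := h12'
        have hcyc : pa^[n2 - n1] x = x := by
          rw [← Nat.sub_add_cancel hpos, Function.iterate_succ_apply', hx2, hp2]
        rcases L1 x _ hcyc with h0 | hxr
        · omega
        · subst hxr
          exact h2r (by rw [← hx2, hfixr])
    intro x y1 y2 h1r hp1 h2r hp2 hne z hz1 hz2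
    obtain ⟨n1, hn1⟩ := hz1
    obtain ⟨n2, hn2⟩ := hz2
    rcases le_total n1 n2 with h | h
    · exact key x y1 y2 h1r hp1 h2r hp2 hne z n1 n2 hn1 hn2 h
    · exact key x y2 y1 h2r hp2 h1r hp1 (Ne.symm hne) z n2 n1 hn2 hn1 h
  have hdecomp : ∀ x z, z ∈ sub x → z ≠ x → ∃ y, (y ≠ r ∧ pa y = x) ∧ z ∈ sub y := by
    intro x z hz hne
    obtain ⟨n0, hn0⟩ := hz
    have hP : ∃ n, 0 < n ∧ pa^[n] z = x := by
      refine ⟨n0, ?_, hn0⟩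
      rcases Nat.eq_zero_or_pos n0 with h0 | h
      · rw [h0, Function.iterate_zero_apply] at hn0; exact absurd hn0 hne
      · exact h
    set m := Nat.find hP with hm
    obtain ⟨hmpos, hmx⟩ := Nat.find_spec hP
    refine ⟨pa^[m - 1] z, ⟨?_, ?_⟩, m - 1, rfl⟩
    · intro hyr
      have hxr : x = r := by
        rw [← hmx, ← Nat.sub_add_cancel hmpos, Function.iterate_succ_apply', hyr, hroot]
      rcases Nat.eq_zero_or_pos (m - 1) with h0 | hpos
      · rw [h0, Function.iterate_zero_apply] at hyr
        exact hne (hyr.trans hxr.symm)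
      · exact Nat.find_min hP (by omega : m - 1 < m) ⟨hpos, by rw [hyr, hxr]⟩
    · have hh := Function.iterate_succ_apply' pa (m - 1) z
      rw [← hh, (by omega : (m - 1).succ = m)]
      exact hmx
  have hsubr : sub r = Set.univ := Set.eq_univ_of_forall (fun y => hreach y)
  -- children finset and the counting finset
  set ChF : VT → Finset VT := fun x => Finset.univ.filter (fun y => y ≠ r ∧ pa y = x)
    with hChF
  set SF : VT → V → Finset (VT → V) := fun x u =>
    Finset.univ.filter (fun h =>
      (∀ z ∈ sub x, lam (h z) = mu z) ∧
      (∀ z ∈ sub x, z ≠ x → E (h z) (h (pa z))) ∧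
      h x = u ∧ ∀ z, z ∉ sub x → h z = v) with hSF
  have hmemSF : ∀ x u (h : VT → V), h ∈ SF x u ↔
      ((∀ z ∈ sub x, lam (h z) = mu z) ∧
      (∀ z ∈ sub x, z ≠ x → E (h z) (h (pa z))) ∧
      h x = u ∧ ∀ z, z ∉ sub x → h z = v) := by
    intro x u h
    rw [hSF]
    simp only [Finset.mem_filter, Finset.mem_univ, true_and]
  have hmemCh : ∀ x y, y ∈ ChF x ↔ (y ≠ r ∧ pa y = x) := by
    intro x y
    rw [hChF]
    simp only [Finset.mem_filter, Finset.mem_univ, true_and]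
  have hchin : ∀ x y, y ∈ ChF x → y ∈ sub x := by
    intro x y hy
    obtain ⟨hyr, hpy⟩ := (hmemCh x y).1 hy
    exact ⟨1, by simpa using hpy⟩
  -- main induction
  have key : ∀ n : ℕ, ∀ x u, (sub x).ncard ≤ n → (SF x u).card = f (col u) x := by
    intro n
    induction n with
    | zero =>
      intro x u hle
      have := (Set.ncard_pos (Set.toFinite (sub x))).mpr ⟨x, hself x⟩
      omega
    | succ n ih =>
      intro x u hle
      have ihchild : ∀ y ∈ ChF x, ∀ w, (SF y w).card = f (col w) y := by
        intro y hy w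
        obtain ⟨hyr, hpy⟩ := (hmemCh x y).1 hy
        have hss : sub y ⊂ sub x :=
          ⟨hchsub x y hpy, fun hsup => hnotin x y hyr hpy (hsup (hself x))⟩
        have := Set.ncard_lt_ncard hss (Set.toFinite _)
        exact ih y w (by omega)
      rw [hf (col u) x, hlamC u]
      by_cases hlab : lam u = mu x
      · -- positive case
        rw [if_pos hlab, one_mul]
        -- Step B : product decomposition via bijection
        have hstepB : (SF x u).card = ∏ y ∈ ChF x, (Finset.univ.filter
            (fun g : VT → V => E u (g y) ∧ g ∈ SF y (g y))).card := by
          rw [← Finset.card_pi]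
          refine Finset.card_bij
            (fun h _ => fun y _ => fun z => if z ∈ sub y then h z else v) ?_ ?_ ?_
          · -- maps into pi
            intro h hh
            rw [Finset.mem_pi]
            intro y hy
            obtain ⟨hyr, hpy⟩ := (hmemCh x y).1 hy
            obtain ⟨h1, h2, h3, h4⟩ := (hmemSF x u h).1 hh
            rw [Finset.mem_filter]
            beta_reduce
            refine ⟨Finset.mem_univ _, ?_, ?_⟩
            · rw [if_pos (hself y)]
              have hEyu : E (h y) (h (pa y)) := h2 y (hchin x y hy) (hchne x y hyr hpy)
              rw [hpy, h3] at hEyu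
              exact hE hEyu
            · rw [hmemSF]
              refine ⟨?_, ?_, ?_, ?_⟩
              · intro z hz
                beta_reduce
                rw [if_pos hz]
                exact h1 z (hchsub x y hpy hz)
              · intro z hz hzy
                have hpz : pa z ∈ sub y := hpacl y z hz hzy
                beta_reduce
                rw [if_pos hz, if_pos hpz]
                have hzx : z ≠ x := fun he => hnotin x y hyr hpy (he ▸ hz)
                exact h2 z (hchsub x y hpy hz) hzx
              · rfl
              · intro z hz
                beta_reduce
                rw [if_neg hz]
          · -- injective
            intro h1 h1m h2 h2m heq
            funext z
            by_cases hzx : z = x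
            · subst hzx
              rw [((hmemSF z u h1).1 h1m).2.2.1, ((hmemSF z u h2).1 h2m).2.2.1]
            by_cases hzs : z ∈ sub x
            · obtain ⟨y, ⟨hyr, hpy⟩, hzy⟩ := hdecomp x z hzs hzx
              have hy : y ∈ ChF x := (hmemCh x y).2 ⟨hyr, hpy⟩
              have hzeq := congrFun (congrFun (congrFun heq y) hy) z
              simp only [hzy, if_true] at hzeq
              exact hzeq
            · rw [((hmemSF x u h1).1 h1m).2.2.2 z hzs, ((hmemSF x u h2).1 h2m).2.2.2 z hzs]
          · -- surjective
            intro g hg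
            rw [Finset.mem_pi] at hg
            have hgy : ∀ y (hy : y ∈ ChF x),
                E u (g y hy y) ∧ g y hy ∈ SF y (g y hy y) := by
              intro y hy
              have := hg y hy
              rw [Finset.mem_filter] at this
              exact this.2
            set h0 : VT → V := fun z =>
              if hz : ∃ y, (y ≠ r ∧ pa y = x) ∧ z ∈ sub y then
                g hz.choose ((hmemCh x _).2 hz.choose_spec.1) z
              else if z = x then u else v with hh0
            have hglue : ∀ z y (hy : y ∈ ChF x), z ∈ sub y → h0 z = g y hy z := by
              intro z y hy hzy
              obtain ⟨hyr, hpy⟩ := (hmemCh x y).1 hy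
              have hz : ∃ y', (y' ≠ r ∧ pa y' = x) ∧ z ∈ sub y' := ⟨y, ⟨hyr, hpy⟩, hzy⟩
              simp only [hh0]
              rw [dif_pos hz]
              obtain ⟨⟨h1r, h1p⟩, h1s⟩ := hz.choose_spec
              by_cases hcy : hz.choose = y
              · exact hcy ▸ rfl
              · exact (hdisj x _ y h1r h1p hyr hpy hcy z h1s hzy).elim
            have hx0 : h0 x = u := by
              simp only [hh0]
              have hnex : ¬ ∃ y, (y ≠ r ∧ pa y = x) ∧ x ∈ sub y := by
                rintro ⟨y, ⟨hyr, hpy⟩, hxy⟩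
                exact hnotin x y hyr hpy hxy
              rw [dif_neg hnex]
              simp
            have hout : ∀ z, z ∉ sub x → h0 z = v := by
              intro z hz
              have hnex : ¬ ∃ y, (y ≠ r ∧ pa y = x) ∧ z ∈ sub y := by
                rintro ⟨y, ⟨hyr, hpy⟩, hzy⟩
                exact hz (hchsub x y hpy hzy)
              have hzx : z ≠ x := fun he => hz (he ▸ hself x)
              simp only [hh0]
              rw [dif_neg hnex, if_neg hzx]
            have hmem : h0 ∈ SF x u := by
              rw [hmemSF]
              refine ⟨?_, ?_, hx0, hout⟩
              · intro z hzs
                by_cases hzx : z = x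
                · subst hzx; rw [hx0]; exact hlab
                · obtain ⟨y, ⟨hyr, hpy⟩, hzy⟩ := hdecomp x z hzs hzx
                  have hy := (hmemCh x y).2 ⟨hyr, hpy⟩
                  rw [hglue z y hy hzy]
                  exact ((hmemSF y _ _).1 (hgy y hy).2).1 z hzy
              · intro z hzs hzx
                obtain ⟨y, ⟨hyr, hpy⟩, hzy⟩ := hdecomp x z hzs hzx
                have hy := (hmemCh x y).2 ⟨hyr, hpy⟩
                obtain ⟨hEuw, hgS⟩ := hgy y hy
                obtain ⟨g1, g2, g3, g4⟩ := (hmemSF y _ _).1 hgS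
                by_cases hzy' : z = y
                · subst hzy'
                  rw [hglue z z hy (hself z), hpy, hx0]
                  exact hE hEuw
                · have hpz : pa z ∈ sub y := hpacl y z hzy hzy'
                  rw [hglue z y hy hzy, hglue (pa z) y hy hpz]
                  exact g2 z hzy hzy'
            refine ⟨h0, hmem, ?_⟩
            funext y hy z
            beta_reduce
            by_cases hzy : z ∈ sub y
            · rw [if_pos hzy]
              exact hglue z y hy hzy
            · rw [if_neg hzy]
              exact (((hmemSF y _ _).1 (hgy y hy).2).2.2.2 z hzy).symm
        rw [hstepB]
        -- Step A : evaluate each factor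
        refine Finset.prod_congr rfl ?_
        intro y hy
        have hfib : (Finset.univ.filter (fun g : VT → V => E u (g y) ∧ g ∈ SF y (g y))).card
            = ∑ w : V, ((Finset.univ.filter
                (fun g : VT → V => E u (g y) ∧ g ∈ SF y (g y))).filter
                (fun g => g y = w)).card :=
          Finset.card_eq_sum_card_fiberwise (fun g _ => Finset.mem_univ (g y))
    /- sums -/
        have hfib2 : ∀ w : V, ((Finset.univ.filter
            (fun g : VT → V => E u (g y) ∧ g ∈ SF y (g y))).filter (fun g => g y = w))
            = if E u w then SF y w else ∅ := by
          intro w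
          ext g
          by_cases hEw : E u w
          · rw [if_pos hEw]
            simp only [Finset.mem_filter, Finset.mem_univ, true_and]
            constructor
            · rintro ⟨⟨_, hgS⟩, hgw⟩
              rw [← hgw]
              exact ((hmemSF y (g y) g).2 ((hmemSF y (g y) g).1 hgS))
            · intro hgS
              have hgw : g y = w := ((hmemSF y w g).1 hgS).2.2.1
              refine ⟨⟨by rw [hgw]; exact hEw, by rw [hgw]; exact hgS⟩, hgw⟩
          · rw [if_neg hEw]
            simp only [Finset.mem_filter, Finset.mem_univ, true_and,
              Finset.notMem_empty, iff_false]
            rintro ⟨⟨hEg, _⟩, hgw⟩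
            exact hEw (hgw ▸ hEg)
        rw [hfib]
        calc ∑ w : V, ((Finset.univ.filter
                (fun g : VT → V => E u (g y) ∧ g ∈ SF y (g y))).filter
                (fun g => g y = w)).card
            = ∑ w : V, (if E u w then (SF y w).card else 0) := by
              refine Finset.sum_congr rfl fun w _ => ?_
              rw [hfib2 w]
              split_ifs <;> simp
          _ = ∑ w : V, (if E u w then f (col w) y else 0) := by
              refine Finset.sum_congr rfl fun w _ => ?_
              split_ifs with hEw
              · exact ihchild y hy w
              · rfl
          _ = ∑ w : V, ∑ c' : C, (if E u w ∧ col w = c' then f c' y else 0) := by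
              refine Finset.sum_congr rfl fun w _ => ?_
              by_cases hEw : E u w
              · simp only [hEw, true_and, if_true]
                rw [Finset.sum_ite_eq]
                simp
              · simp [hEw]
          _ = ∑ c' : C, ∑ w : V, (if E u w ∧ col w = c' then f c' y else 0) :=
              Finset.sum_comm
          _ = ∑ c' : C, f c' y * degf (col u) c' := by
              refine Finset.sum_congr rfl fun c' _ => ?_
              rw [← Finset.sum_filter, Finset.sum_const, smul_eq_mul, mul_comm]
              congr 1
              rw [hdeg u c']
              have hcn : ColNbrs E col u c'
                  = ↑(Finset.univ.filter fun w => E u w ∧ col w = c') := by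
                ext w
                simp [ColNbrs]
              rw [hcn, Set.ncard_coe_finset]
      · -- negative case
        rw [if_neg hlab, zero_mul, Finset.card_eq_zero, Finset.eq_empty_iff_forall_notMem]
        intro h hh
        obtain ⟨h1, h2, h3, h4⟩ := (hmemSF x u h).1 hh
        exact hlab (h3 ▸ h1 x (hself x))
  -- conclusion
  rw [← key ((sub r).ncard) r v le_rfl]
  have hset : {h : VT → V | (∀ x, lam (h x) = mu x) ∧
      (∀ x, x ≠ r → E (h x) (h (pa x))) ∧ h r = v} = ↑(SF r v) := by
    ext h
    simp only [Set.mem_setOf_eq, Finset.mem_coe]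
    rw [hmemSF]
    constructor
    · rintro ⟨h1, h2, h3⟩
      exact ⟨fun z _ => h1 z, fun z _ hz => h2 z hz, h3,
        fun z hz => (hz (by rw [hsubr]; trivial)).elim⟩
    · rintro ⟨h1, h2, h3, h4⟩
      exact ⟨fun z => h1 z (by rw [hsubr]; trivial),
        fun z hz => h2 z (by rw [hsubr]; trivial) hz, h3⟩
  rw [hset, Set.ncard_coe_finset]
end

section
/- Let Q be a conjunctive-query-like structure over a binary signature, represented as a finite simple graph H = (V, E) (the Gaifman graph of Q) together with a set F ⊆ V of free variables. Suppose H is a forest and for every connected component C of H, the subgraph of C induced by F ∩ V(C) is connected or empty. Then the hypergraph with vertex set V and hyperedge set {{x,y} : {x,y} ∈ E} ∪ {F} is α-acyclic, i.e., admits a join tree: a tree whose nodes are exactly these hyperedges such that for each v ∈ V, the set of nodes containing v induces a connected subtree. -/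
/-!
Call `F` path-convex in `H` if every path of `H` between two vertices of `F` stays inside `F`;
in a forest this is what the hypothesis on the components says. A forest with an edge has a
pendant edge `xy`, with `x` a leaf, such that `x ∈ F → y ∈ F`: both ends of a longest path are
leaves, and if both lie in `F` then so does the whole path. Deleting `xy` keeps the forest
path-convex, and afterwards `F` is the only hyperedge that can contain `x`. Hence `{x, y}` meets
the remaining hyperedges inside a single one of them (`F` if `y ∈ F` or `y` occurs nowhere else,
otherwise any hyperedge through `y`), and such an ear can be hung as a leaf onto a join tree of the
remaining hyperedges. Induction on the number of edges finishes the proof.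
-/

/-- The hyperedge set of the hypergraph associated with a graph `H` and a set
`F` of free variables: all edges `{x, y}` of `H`, together with `F` itself. -/
def JEdges {V : Type*} (H : SimpleGraph V) (F : Set V) : Set (Set V) :=
  {e | ∃ x y, H.Adj x y ∧ e = {x, y}} ∪ {F}

/-- A set of hyperedges admits a join tree: a tree whose nodes are exactly the
hyperedges, such that for every vertex `v` the hyperedges containing `v`
induce a connected subtree. -/
def HasJoinTree {V : Type*} (H : Set (Set V)) : Prop :=
  ∃ T : SimpleGraph ↥H, T.IsTree ∧
    ∀ v : V, ({e : ↥H | v ∈ (e : Set V)}).Nonempty →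
      (SimpleGraph.induce {e : ↥H | v ∈ (e : Set V)} T).Connected

namespace SimpleGraph

variable {V W : Type*} {G : SimpleGraph V}

theorem IsAcyclic.map (f : V ↪ W) (hG : G.IsAcyclic) : (G.map f).IsAcyclic := by
  intro w c hc
  have hrange : ∀ x ∈ c.support, x ∈ Set.range f := by
    intro x hx
    obtain ⟨e, he, hxe⟩ := (Walk.mem_support_iff_exists_mem_edges_of_not_nil hc.not_nil).mp hx
    obtain ⟨e', -, rfl⟩ := (edgeSet_map f G).subset (c.edges_subset_edgeSet he)
    obtain ⟨y, -, rfl⟩ := Sym2.mem_map.mp hxe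
    exact ⟨y, rfl⟩
  have hc' : (c.induce _ hrange).IsCycle :=
    Walk.IsCycle.of_map (f := (Embedding.induce _).toHom) (by rwa [Walk.map_induce])
  exact (Embedding.map f G).isoInduceRange.isAcyclic_iff.mp hG _ hc'

theorem Connected.induce_image {G' : SimpleGraph W} (φ : G →g G') {s : Set V}
    (hs : (G.induce s).Connected) : (G'.induce (φ '' s)).Connected :=
  hs.map (induceHom φ (Set.mapsTo_image φ s)) (by rintro ⟨_, x, hx, rfl⟩; exact ⟨⟨x, hx⟩, rfl⟩)

theorem IsTree.map_sup_edge (hG : G.IsTree) (f : V ↪ W) {a : W} (ha : a ∉ Set.range f)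
    (hW : ∀ b, b ≠ a → b ∈ Set.range f) (t : V) : (G.map f ⊔ edge a (f t)).IsTree := by
  have hat : a ≠ f t := fun h => ha ⟨t, h.symm⟩
  refine ⟨(connected_iff_exists_forall_reachable _).mpr ⟨f t, fun b => ?_⟩, ?_⟩
  · by_cases hb : b = a
    · subst hb
      exact Adj.reachable (Or.inr (by simp [edge_adj, hat.symm]))
    · obtain ⟨m, rfl⟩ := hW b hb
      exact ((hG.connected.preconnected t m).map (Embedding.map f G).toHom).mono le_sup_left
  · refine (hG.isAcyclic.map f).sup_edge_of_not_reachable fun ⟨p⟩ => ?_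
    obtain ⟨u, -, -, rfl, -⟩ := (map_adj f G _ _).mp (p.adj_snd (p.not_nil_of_ne hat))
    exact ha ⟨u, rfl⟩

theorem IsAcyclic.exists_isPath_between_leaves [Finite V] (hG : G.IsAcyclic) (hne : G ≠ ⊥) :
    ∃ (u v : V) (p : G.Walk u v), p.IsPath ∧ ¬p.Nil ∧
      (∀ w, G.Adj u w → w = p.snd) ∧ ∀ w, G.Adj v w → w = p.penultimate := by
  obtain ⟨a, b, hab⟩ := ne_bot_iff_exists_adj.mp hne
  have : Nonempty V := ⟨a⟩
  obtain ⟨u, v, p, hp, hmax⟩ := Walk.exists_isPath_forall_isPath_length_le_length G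
  have hleaf {u v : V} {q : G.Walk u v} (hq : q.IsPath) (hlen : q.length = p.length) (w : V)
      (hw : G.Adj u w) : w = q.snd := by
    refine hG.eq_snd_of_adj_start hq hw (by_contra fun hwq => ?_)
    have := hmax _ _ _ (hq.cons hwq (h := hw.symm))
    rw [Walk.length_cons] at this
    omega
  have hnil : ¬p.Nil := fun h => by
    have := hmax _ _ _ (Path.singleton hab).2
    rw [Walk.length_eq_zero_iff.mpr h] at this
    simp at this
  refine ⟨u, v, p, hp, hnil, hleaf hp rfl, fun w hw => ?_⟩
  rw [← Walk.snd_reverse]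
  exact hleaf hp.reverse p.length_reverse w hw

def IsPathConvex (G : SimpleGraph V) (F : Set V) : Prop :=
  ∀ ⦃u v : V⦄ (p : G.Walk u v), p.IsPath → u ∈ F → v ∈ F → ∀ w ∈ p.support, w ∈ F

variable {F : Set V}

theorem IsPathConvex.anti {G' : SimpleGraph V} (h : G' ≤ G) (hF : G.IsPathConvex F) :
    G'.IsPathConvex F :=
  fun _ _ p hp hu hv w hw =>
    hF (p.mapLe h) (hp.mapLe h) hu hv w ((p.support_mapLe_eq_support h).symm ▸ hw)

theorem IsAcyclic.isPathConvex (hG : G.IsAcyclic)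
    (hF : ∀ u v : F, G.Reachable u v → (G.induce F).Reachable u v) : G.IsPathConvex F := by
  classical
  intro u v p hp hu hv w hw
  obtain ⟨q⟩ := hF ⟨u, hu⟩ ⟨v, hv⟩ ⟨p⟩
  let q' : G.Walk u v := q.map (Embedding.induce F).toHom
  have hpq : p = q'.bypass :=
    congrArg Subtype.val ((hG.subsingleton_path u v).elim ⟨p, hp⟩ ⟨_, q'.bypass_isPath⟩)
  rw [hpq] at hw
  obtain ⟨w', -, rfl⟩ := List.mem_map.mp (q.support_map _ ▸ q'.support_bypass_subset_support hw)
  exact w'.2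

theorem reachable_induce_of_forall_connectedComponent
    (hF : ∀ c : G.ConnectedComponent, {v | v ∈ F ∧ G.connectedComponentMk v = c} = ∅ ∨
      (G.induce {v | v ∈ F ∧ G.connectedComponentMk v = c}).Connected)
    (u v : F) (huv : G.Reachable u v) : (G.induce F).Reachable u v := by
  have hu : (u : V) ∈ {w | w ∈ F ∧ G.connectedComponentMk w = G.connectedComponentMk u} :=
    ⟨u.2, rfl⟩
  have hv : (v : V) ∈ {w | w ∈ F ∧ G.connectedComponentMk w = G.connectedComponentMk u} :=
    ⟨v.2, (ConnectedComponent.sound huv).symm⟩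
  rcases hF (G.connectedComponentMk u) with hempty | hconn
  · exact absurd (hempty ▸ hu) (Set.notMem_empty _)
  · exact (hconn.preconnected ⟨u, hu⟩ ⟨v, hv⟩).map (G.induceHomOfLE fun _ h => h.1).toHom

theorem IsPathConvex.exists_pendant_edge [Finite V] (hF : G.IsPathConvex F) (hG : G.IsAcyclic)
    (hne : G ≠ ⊥) : ∃ x y, G.Adj x y ∧ (∀ z, G.Adj x z → z = y) ∧ (x ∈ F → y ∈ F) := by
  obtain ⟨u, v, p, hp, hnil, hu, hv⟩ := hG.exists_isPath_between_leaves hne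
  by_cases hvF : v ∈ F
  · exact ⟨u, p.snd, p.adj_snd hnil, hu, fun huF => hF p hp huF hvF _ (p.getVert_mem_support 1)⟩
  · exact ⟨v, p.penultimate, (p.adj_penultimate hnil).symm, hv, fun h => absurd h hvF⟩

end SimpleGraph

open SimpleGraph

section JoinTree

variable {V : Type*}

theorem hasJoinTree_singleton (e : Set V) : HasJoinTree {e} :=
  ⟨⊥, .of_subsingleton, fun _ hv => have := hv.to_subtype; .of_subsingleton⟩

theorem HasJoinTree.insert_of_inter_sUnion_subset {S : Set (Set V)} (hS : HasJoinTree S)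
    {e t : Set V} (ht : t ∈ S) (he : e ∩ ⋃₀ S ⊆ t) : HasJoinTree (insert e S) := by
  by_cases heS : e ∈ S
  · rwa [Set.insert_eq_of_mem heS]
  obtain ⟨T', hT', hconn'⟩ := hS
  let ι : ↥S ↪ ↥(insert e S) := ⟨Set.inclusion (Set.subset_insert e S), Set.inclusion_injective _⟩
  let E : ↥(insert e S) := ⟨e, Set.mem_insert e S⟩
  have hE : E ∉ Set.range ι := by
    rintro ⟨m, hm⟩
    have hme : (m : Set V) = e := congrArg Subtype.val hm
    exact heS (hme ▸ m.2)
  have hcover : ∀ n, n ≠ E → n ∈ Set.range ι := by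
    rintro ⟨n, hn | hn⟩ hne
    · exact absurd (Subtype.ext hn) hne
    · exact ⟨⟨n, hn⟩, rfl⟩
  let T := T'.map ι ⊔ edge E (ι ⟨t, ht⟩)
  let φ : T' →g T := (Hom.ofLE le_sup_left).comp (Embedding.map ι T').toHom
  refine ⟨T, hT'.map_sup_edge ι hE hcover _, fun v hv => ?_⟩
  set A := {m : ↥S | v ∈ (m : Set V)}
  have hset : {n : ↥(insert e S) | v ∈ (n : Set V)} = {n | n = E ∧ v ∈ e} ∪ ι '' A := by
    ext n
    refine ⟨fun hvn => ?_, ?_⟩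
    · by_cases hnE : n = E
      · subst hnE
        exact Or.inl ⟨rfl, hvn⟩
      · obtain ⟨m, rfl⟩ := hcover n hnE
        exact Or.inr ⟨m, hvn, rfl⟩
    · rintro (⟨rfl, hve⟩ | ⟨m, hvm, rfl⟩) <;> assumption
  have himage (hA : A.Nonempty) : (T.induce (ι '' A)).Connected :=
    (hconn' v hA).induce_image φ
  have hEconn : (T.induce {E}).Connected := by
    rw [induce_singleton_eq_top]
    exact connected_top
  by_cases hve : v ∈ e
  · have hEv : {n | n = E ∧ v ∈ e} = {E} := by ext; simp [hve]
    rw [hset, hEv]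
    rcases A.eq_empty_or_nonempty with hA | hA
    · rwa [hA, Set.image_empty, Set.union_empty]
    · have hvt : v ∈ t := he ⟨hve, ⟨_, hA.some.2, hA.some_mem⟩⟩
      refine connected_induce_union hEconn.preconnected (himage hA).preconnected rfl
        ⟨⟨t, ht⟩, hvt, rfl⟩ (Or.inr ?_)
      simpa [edge_adj] using fun h => hE ⟨_, h.symm⟩
  · have hEv : {n | n = E ∧ v ∈ e} = ∅ := by ext; simp [hve]
    rw [hset, hEv, Set.empty_union] at hv ⊢
    exact himage (Set.image_nonempty.mp hv)

theorem HasJoinTree.insert_pair {S : Set (Set V)} (hS : HasJoinTree S) {F : Set V} (hF : F ∈ S)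
    {x y : V} (hx : ∀ s ∈ S, x ∈ s → s = F) (hxy : x ∈ F → y ∈ F) :
    HasJoinTree (insert {x, y} S) := by
  by_cases hy : y ∈ F ∨ y ∉ ⋃₀ S
  · refine hS.insert_of_inter_sUnion_subset hF ?_
    rintro v ⟨rfl | rfl, s, hs, hvs⟩
    · exact hx s hs hvs ▸ hvs
    · exact hy.resolve_right (not_not.mpr ⟨s, hs, hvs⟩)
  · rw [not_or, not_not] at hy
    obtain ⟨hyF, t, ht, hyt⟩ := hy
    refine hS.insert_of_inter_sUnion_subset ht ?_
    rintro v ⟨rfl | rfl, s, hs, hvs⟩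
    · exact absurd (hxy (hx s hs hvs ▸ hvs)) hyF
    · exact hyt

theorem jEdges_bot (F : Set V) : JEdges ⊥ F = {F} := by
  simp [JEdges]

theorem insert_jEdges_deleteEdges {H : SimpleGraph V} {x y : V} (hxy : H.Adj x y) (F : Set V) :
    insert {x, y} (JEdges (H.deleteEdges {s(x, y)}) F) = JEdges H F := by
  ext s
  simp only [JEdges, Set.mem_insert_iff, Set.mem_union, Set.mem_ofPred_eq, deleteEdges_adj,
    Set.mem_singleton_iff]
  refine ⟨?_, ?_⟩
  · rintro (rfl | ⟨a, b, ⟨hab, -⟩, rfl⟩ | rfl)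
    exacts [Or.inl ⟨x, y, hxy, rfl⟩, Or.inl ⟨a, b, hab, rfl⟩, Or.inr rfl]
  · rintro (⟨a, b, hab, rfl⟩ | rfl)
    · by_cases hs : s(a, b) = s(x, y)
      · rcases Sym2.eq_iff.mp hs with ⟨rfl, rfl⟩ | ⟨rfl, rfl⟩
        exacts [Or.inl rfl, Or.inl (Set.pair_comm _ _)]
      · exact Or.inr (Or.inl ⟨a, b, ⟨hab, hs⟩, rfl⟩)
    · exact Or.inr (Or.inr rfl)

theorem hasJoinTree_jEdges [Finite V] {H : SimpleGraph V} (hH : H.IsAcyclic) {F : Set V}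
    (hF : H.IsPathConvex F) : HasJoinTree (JEdges H F) := by
  induction H using WellFoundedLT.induction with
  | _ H ih =>
    rcases eq_or_ne H ⊥ with rfl | hne
    · rw [jEdges_bot]
      exact hasJoinTree_singleton F
    obtain ⟨x, y, hxy, hleaf, hxyF⟩ := hF.exists_pendant_edge hH hne
    set H' := H.deleteEdges {s(x, y)}
    have hlt : H' < H := lt_of_le_of_ne (deleteEdges_le _) fun h => by
      have : H'.Adj x y := h ▸ hxy
      simp [H'] at this
    have hx_isolated (z : V) : ¬H'.Adj x z := fun hz => by
      obtain ⟨hxz, hz⟩ := deleteEdges_adj.mp hz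
      exact hz (hleaf z hxz ▸ rfl)
    have hx : ∀ s ∈ JEdges H' F, x ∈ s → s = F := by
      rintro s (⟨a, b, hab, rfl⟩ | hs) hxs
      · rcases hxs with rfl | rfl
        exacts [absurd hab (hx_isolated b), absurd hab.symm (hx_isolated a)]
      · exact hs
    rw [← insert_jEdges_deleteEdges hxy]
    exact (ih H' hlt (hH.anti hlt.le) (hF.anti hlt.le)).insert_pair (Or.inr rfl) hx hxyF

end JoinTree

theorem stmt17 {V : Type*} [Fintype V] (H : SimpleGraph V)
    (hforest : H.IsAcyclic) (F : Set V)
    (hfree : ∀ comp : H.ConnectedComponent,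
      ({v | v ∈ F ∧ H.connectedComponentMk v = comp} : Set V) = ∅ ∨
      (SimpleGraph.induce
        ({v | v ∈ F ∧ H.connectedComponentMk v = comp} : Set V) H).Connected) :
    HasJoinTree (JEdges H F) :=
  hasJoinTree_jEdges hforest
    (hforest.isPathConvex (reachable_induce_of_forall_connectedComponent hfree))
end
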